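/- Let G be a topological group, H a closed subgroup, and K a strongly neutral subgroup of G. If the quotient space K\G is first-countable, then the double coset space K\G/H is metrizable. -/

import Mathlib

/-!
The sets `{(KxH, KvxH) | x ∈ G, v ∈ V}`, for `V` a neighbourhood of `1`, form a uniformity on
`K\G/H` that induces the quotient topology. Strong neutrality, in the form `W K ⊆ K V` for small
`W`, is what makes these sets compose and what makes their balls comparable with the images of
neighbourhoods in `G`. A countable neighbourhood base of the coset `K` in `K\G` gives a countable
base of this uniformity, and double cosets are closed because `K C` is closed for every closed
`C`. A T₁ uniform space with countably generated uniformity is metrizable.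
-/

open scoped Pointwise

/-- The quotient topology on the double coset space. -/
instance dosetQuotientTopology {G : Type*} [Group G] [TopologicalSpace G] (K H : Set G) :
    TopologicalSpace (DoubleCoset.Quotient K H) :=
  inferInstanceAs (TopologicalSpace (Quotient (DoubleCoset.setoid K H)))

open Filter Topology Uniformity

def IsStronglyNeutral {G : Type*} [Group G] [TopologicalSpace G] (K : Set G) : Prop :=
  ∀ O : Set G, IsOpen O → K ⊆ O → ∃ V : Set G, IsOpen V ∧ (1 : G) ∈ V ∧ K * V ⊆ O

namespace IsStronglyNeutral

variable {G : Type*} [Group G] [TopologicalSpace G] [IsTopologicalGroup G] {K : Subgroup G}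

theorem exists_nhds_one_mul_subset_mul (hK : IsStronglyNeutral (K : Set G)) {V : Set G}
    (hV : V ∈ 𝓝 1) : ∃ W ∈ 𝓝 (1 : G), W * K ⊆ K * V := by
  obtain ⟨W, hWo, hW1, hW⟩ := hK ((interior V)⁻¹ * K) isOpen_interior.inv.mul_right
    (Set.subset_mul_right _ (by simpa using mem_interior_iff_mem_nhds.2 hV))
  refine ⟨W⁻¹, inv_mem_nhds_one G (hWo.mem_nhds hW1), ?_⟩
  calc W⁻¹ * (K : Set G) = ((K : Set G) * W)⁻¹ := by rw [mul_inv_rev, inv_coe_set]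
    _ ⊆ ((interior V)⁻¹ * K)⁻¹ := Set.inv_subset_inv.2 hW
    _ = K * interior V := by rw [mul_inv_rev, inv_inv, inv_coe_set]
    _ ⊆ K * V := Set.mul_subset_mul_left interior_subset

theorem isClosed_mul (hK : IsStronglyNeutral (K : Set G)) {C : Set G} (hC : IsClosed C) :
    IsClosed ((K : Set G) * C) := by
  refine isOpen_compl_iff.1 (isOpen_iff_mem_nhds.2 fun g hg => ?_)
  obtain ⟨V, hVo, hV1, hV⟩ := hK ((· * g) ⁻¹' Cᶜ)
    (hC.isOpen_compl.preimage (continuous_mul_const g))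
    fun k hk hkg => hg ⟨k⁻¹, K.inv_mem hk, k * g, hkg, by group⟩
  have hVg : (· * g⁻¹) ⁻¹' V ∈ 𝓝 g :=
    (continuous_mul_const g⁻¹).continuousAt.preimage_mem_nhds (by simpa using hVo.mem_nhds hV1)
  refine mem_of_superset hVg ?_
  rintro _ hy ⟨k, hk, c, hc, rfl⟩
  refine hV (Set.mul_mem_mul (K.inv_mem hk) hy) ?_
  simpa [mul_assoc] using hc

theorem exists_seq_mem_nhds_one_subset_mul (hK : IsStronglyNeutral (K : Set G))
    [FirstCountableTopology (Quotient (QuotientGroup.rightRel K))] :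
    ∃ V : ℕ → Set G, (∀ n, V n ∈ 𝓝 1) ∧ ∀ W ∈ 𝓝 (1 : G), ∃ n, V n ⊆ K * W := by
  set π := Quotient.mk (QuotientGroup.rightRel K)
  have hπ : IsOpenQuotientMap π := MulAction.isOpenQuotientMap_quotientMk
  have hπK : ∀ k ∈ K, π k = π 1 := fun k hk =>
    Quotient.sound (QuotientGroup.rightRel_apply.2 (by simpa using K.inv_mem hk))
  obtain ⟨t, ht, hbasis⟩ := (nhds_basis_opens (π 1)).exists_antitone_subbasis
  have hV : ∀ n, ∃ V : Set G, IsOpen V ∧ (1 : G) ∈ V ∧ (K : Set G) * V ⊆ π ⁻¹' t n :=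
    fun n => hK _ ((ht n).2.preimage hπ.continuous) fun k hk => by
      simpa [Set.mem_preimage, hπK k hk] using (ht n).1
  choose V hVo hV1 hVt using hV
  refine ⟨V, fun n => (hVo n).mem_nhds (hV1 n), fun W hW => ?_⟩
  obtain ⟨n, -, hn⟩ := hbasis.toHasBasis.mem_iff.1 (hπ.isOpenMap.image_mem_nhds hW)
  refine ⟨n, fun y hy => ?_⟩
  obtain ⟨w, hw, hwy⟩ := hn (hVt n (Set.subset_mul_right _ K.one_mem hy))
  exact ⟨y * w⁻¹, QuotientGroup.rightRel_apply.1 (Quotient.exact hwy), w, hw, by group⟩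

end IsStronglyNeutral

namespace DoubleCoset

section Algebra

variable {G : Type*} [Group G] (K H : Subgroup G)

theorem mk_mul_mul_of_mem {k h : G} (hk : k ∈ K) (hh : h ∈ H) (g : G) :
    mk K H (k * g * h) = mk K H g :=
  ((eq K H g _).2 ⟨k, hk, h, hh, rfl⟩).symm

theorem mk_mul_of_mem {k : G} (hk : k ∈ K) (g : G) : mk K H (k * g) = mk K H g := by
  simpa using mk_mul_mul_of_mem K H hk H.one_mem g

theorem preimage_image_mk (U : Set G) : mk K H ⁻¹' (mk K H '' U) = K * U * H := by
  ext y
  constructor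
  · rintro ⟨u, hu, huy⟩
    obtain ⟨k, hk, h, hh, rfl⟩ := (eq K H u y).1 huy
    exact Set.mul_mem_mul (Set.mul_mem_mul hk hu) hh
  · rintro ⟨_, ⟨k, hk, u, hu, rfl⟩, h, hh, rfl⟩
    exact ⟨u, hu, (mk_mul_mul_of_mem K H hk hh u).symm⟩

def entourage (V : Set G) : Set (Quotient (K : Set G) H × Quotient (K : Set G) H) :=
  {p | ∃ x, ∃ v ∈ V, p = (mk K H x, mk K H (v * x))}

variable {K H}

theorem entourage_mono : Monotone (entourage K H) := by
  rintro V W hVW _ ⟨x, v, hv, rfl⟩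
  exact ⟨x, v, hVW hv, rfl⟩

theorem entourage_subset_of_subset_mul {V W : Set G} (h : V ⊆ K * W) :
    entourage K H V ⊆ entourage K H W := by
  rintro _ ⟨x, v, hv, rfl⟩
  obtain ⟨k, hk, w, hw, rfl⟩ := h hv
  exact ⟨x, w, hw, by rw [mul_assoc, mk_mul_of_mem K H hk]⟩

theorem exists_eq_mk_mul_of_mem_entourage {V W : Set G} (hWV : W * K ⊆ K * V) {x : G}
    {b : Quotient (K : Set G) H} (hb : (mk K H x, b) ∈ entourage K H W) :
    ∃ v ∈ V, b = mk K H (v * x) := by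
  obtain ⟨y, w, hw, hxyb⟩ := hb
  obtain ⟨hxy, rfl⟩ : mk K H x = mk K H y ∧ b = mk K H (w * y) := Prod.ext_iff.1 hxyb
  obtain ⟨k, hk, h, hh, rfl⟩ := (eq K H x y).1 hxy
  obtain ⟨k', hk', v, hv, hwk⟩ : ∃ k' ∈ K, ∃ v ∈ V, k' * v = w * k := hWV (Set.mul_mem_mul hw hk)
  refine ⟨v, hv, ?_⟩
  calc mk K H (w * (k * x * h)) = mk K H (k' * (v * x) * h) := by
        rw [← mul_assoc k', hwk]; group
    _ = mk K H (v * x) := mk_mul_mul_of_mem K H hk' hh _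

end Algebra

variable {G : Type*} [Group G] [TopologicalSpace G] (K H : Subgroup G)

theorem hasBasis_entourage :
    ((𝓝 (1 : G)).lift' (entourage K H)).HasBasis (· ∈ 𝓝 1) (entourage K H) :=
  (𝓝 1).basis_sets.lift' entourage_mono

variable [IsTopologicalGroup G]

theorem isOpenQuotientMap_mk : IsOpenQuotientMap (mk K H) := by
  refine ⟨Quotient.mk''_surjective, continuous_coinduced_rng, fun U hU => ?_⟩
  change IsOpen (mk K H ⁻¹' (mk K H '' U))
  rw [preimage_image_mk]
  exact hU.mul_left.mul_right

variable {K H}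

open SetRel in
theorem exists_entourage_comp_subset (hK : IsStronglyNeutral (K : Set G)) {V : Set G}
    (hV : V ∈ 𝓝 1) : ∃ W ∈ 𝓝 (1 : G), entourage K H W ○ entourage K H W ⊆ entourage K H V := by
  obtain ⟨U, hUo, hU1, hUV⟩ := exists_open_nhds_one_mul_subset hV
  obtain ⟨W, hW, hWU⟩ := hK.exists_nhds_one_mul_subset_mul (hUo.mem_nhds hU1)
  refine ⟨W ∩ U, inter_mem hW (hUo.mem_nhds hU1), ?_⟩
  rintro ⟨_, c⟩ ⟨_, ⟨x, w, hw, hxb⟩, hbc⟩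
  obtain ⟨rfl, rfl⟩ := Prod.ext_iff.1 hxb
  obtain ⟨u, hu, rfl⟩ := exists_eq_mk_mul_of_mem_entourage
    ((Set.mul_subset_mul_right Set.inter_subset_left).trans hWU) hbc
  exact ⟨x, u * w, hUV (Set.mul_mem_mul hu hw.2), by rw [mul_assoc]⟩

theorem nhds_mk_eq_comap (hK : IsStronglyNeutral (K : Set G)) (x : G) :
    𝓝 (mk K H x) = comap (Prod.mk (mk K H x)) ((𝓝 (1 : G)).lift' (entourage K H)) := by
  have hnhds : (𝓝 (mk K H x)).HasBasis (· ∈ 𝓝 1) ((fun v => mk K H (v * x)) '' ·) := by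
    rw [← (isOpenQuotientMap_mk K H).map_nhds_eq, ← map_mul_right_nhds_one, map_map]
    exact (𝓝 1).basis_sets.map _
  refine hnhds.ext ((hasBasis_entourage K H).comap _) (fun V hV => ?_)
    fun V hV => ⟨V, hV, by rintro _ ⟨v, hv, rfl⟩; exact ⟨x, v, hv, rfl⟩⟩
  obtain ⟨W, hW, hWV⟩ := hK.exists_nhds_one_mul_subset_mul hV
  refine ⟨W, hW, fun b hb => ?_⟩
  obtain ⟨v, hv, rfl⟩ := exists_eq_mk_mul_of_mem_entourage hWV hb
  exact ⟨v, hv, rfl⟩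

variable (K H)

abbrev uniformSpace (hK : IsStronglyNeutral (K : Set G)) :
    UniformSpace (Quotient (K : Set G) H) where
  toTopologicalSpace := inferInstance
  uniformity := (𝓝 (1 : G)).lift' (entourage K H)
  symm := ((hasBasis_entourage K H).tendsto_iff (hasBasis_entourage K H)).2 fun V hV =>
    ⟨V⁻¹, inv_mem_nhds_one G hV, by
      rintro _ ⟨x, v, hv, rfl⟩
      exact ⟨v * x, v⁻¹, Set.mem_inv.1 hv, by simp⟩⟩
  comp := (((hasBasis_entourage K H).lift' (monotone_id.relComp monotone_id)).le_basis_iff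
    (hasBasis_entourage K H)).2 fun _ hV => exists_entourage_comp_subset hK hV
  nhds_eq_comap_uniformity a := by
    obtain ⟨x, rfl⟩ := (isOpenQuotientMap_mk K H).surjective a
    exact nhds_mk_eq_comap hK x

theorem isCountablyGenerated_uniformity (hK : IsStronglyNeutral (K : Set G))
    [FirstCountableTopology (_root_.Quotient (QuotientGroup.rightRel K))] :
    (𝓤[uniformSpace K H hK]).IsCountablyGenerated := by
  obtain ⟨V, hV, hVK⟩ := hK.exists_seq_mem_nhds_one_subset_mul
  refine ((hasBasis_entourage K H).to_hasBasis (fun W hW => ?_)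
    fun n _ => ⟨V n, hV n, subset_rfl⟩).isCountablyGenerated (p := fun _ : ℕ => True)
  obtain ⟨n, hn⟩ := hVK W hW
  exact ⟨n, trivial, entourage_subset_of_subset_mul hn⟩

theorem t1Space (hK : IsStronglyNeutral (K : Set G)) (hH : IsClosed (H : Set G)) :
    T1Space (Quotient (K : Set G) H) := by
  refine ⟨fun a => ?_⟩
  obtain ⟨x, rfl⟩ := (isOpenQuotientMap_mk K H).surjective a
  rw [← Set.image_singleton, ← (isOpenQuotientMap_mk K H).isQuotientMap.isClosed_preimage,
    preimage_image_mk, mul_assoc, Set.singleton_mul]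
  exact hK.isClosed_mul (hH.smul x)

end DoubleCoset

theorem stmt_8_general {G : Type*} [Group G] [TopologicalSpace G] [IsTopologicalGroup G]
    (K H : Subgroup G)
    (hK : ∀ O : Set G, IsOpen O → (K : Set G) ⊆ O →
      ∃ V : Set G, IsOpen V ∧ (1 : G) ∈ V ∧ (K : Set G) * V ⊆ O)
    (hH : IsClosed (H : Set G))
    (hfc : FirstCountableTopology (Quotient (QuotientGroup.rightRel K))) :
    TopologicalSpace.MetrizableSpace (DoubleCoset.Quotient (K : Set G) (H : Set G)) := by
  let _ := DoubleCoset.uniformSpace K H hK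
  have := DoubleCoset.isCountablyGenerated_uniformity K H hK
  have := DoubleCoset.t1Space K H hK hH
  exact UniformSpace.metrizableSpace

/-- if `H` is closed, `K` is strongly neutral and the right coset space
`K\G` is first-countable, then the double coset space `K\G/H` is metrizable. -/
theorem stmt_8 {G : Type*} [Group G] [TopologicalSpace G] [IsTopologicalGroup G] [T2Space G]
    (K H : Subgroup G)
    (hK : ∀ O : Set G, IsOpen O → (K : Set G) ⊆ O →
      ∃ V : Set G, IsOpen V ∧ (1 : G) ∈ V ∧ (K : Set G) * V ⊆ O)
    (hH : IsClosed (H : Set G))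
    (hfc : FirstCountableTopology (Quotient (QuotientGroup.rightRel K))) :
    TopologicalSpace.MetrizableSpace (DoubleCoset.Quotient (K : Set G) (H : Set G)) :=
  stmt_8_general K H hK hH hfc
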